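/- Let P > 0, B > 0, and A be real with A^2 < P·B. Then for every a ≠ 0, sup over γ ≥ 0 of { (1/2)·log(1 + γ) − γ/2 − (γ^2/(1 + γ))·B/(2 a^2 P) + γ·A/(a P) } ≤ (1/2)·log(P·B/(P·B − A^2)), with equality when a = A/P. -/

import Mathlib

/-!
Write `Δ = A²/(P·B)`. For any scaling `a`, the objective parameters `F_y = B/(2a²P)` and
`F_xy = A/(aP)` satisfy `F_xy² = 2·F_y·Δ`. Under this relation the objective is bounded by
`½·log(1/(1-Δ))` through two elementary inequalities: `log t ≤ t - 1` at `t = (1+γ)(1-Δ)`,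
and AM-GM for the cross term `γ·F_xy`. With `a = A/P` both are equalities at
`γ = Δ/(1-Δ)`.
-/

open Real

/-- The objective `R(F_y, F_xy)` at `γ`; the GMI is its supremum over `γ ≥ 0`. -/
noncomputable def gmiObjective (Fy Fxy γ : ℝ) : ℝ :=
  (1 / 2) * log (1 + γ) - γ / 2 - (γ ^ 2 / (1 + γ)) * Fy + γ * Fxy

@[simp]
lemma gmiObjective_zero_right (Fy Fxy : ℝ) : gmiObjective Fy Fxy 0 = 0 := by
  simp [gmiObjective]

lemma cross_term_le_of_sq_eq {Fy Fxy Δ γ : ℝ} (hFy : 0 ≤ Fy) (hΔ : 0 ≤ Δ)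
    (hFxy : Fxy ^ 2 = 2 * Fy * Δ) :
    2 * γ * (1 + γ) * Fxy ≤ 2 * γ ^ 2 * Fy + (1 + γ) ^ 2 * Δ := by
  rcases hFy.eq_or_lt with rfl | hFy
  · have : Fxy = 0 := by simpa using hFxy
    subst this
    nlinarith [sq_nonneg (1 + γ)]
  · -- `2·F_y·(rhs - lhs) = (2γF_y - (1+γ)F_xy)²`
    nlinarith [sq_nonneg (2 * γ * Fy - (1 + γ) * Fxy)]

theorem gmiObjective_le {Fy Fxy Δ γ : ℝ} (hFy : 0 ≤ Fy) (hΔ₀ : 0 ≤ Δ) (hΔ₁ : Δ < 1)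
    (hFxy : Fxy ^ 2 = 2 * Fy * Δ) (hγ : 0 ≤ γ) :
    gmiObjective Fy Fxy γ ≤ (1 / 2) * log (1 / (1 - Δ)) := by
  have h1γ : 0 < 1 + γ := by linarith
  have h1Δ : 0 < 1 - Δ := by linarith
  have hlog : log (1 + γ) + log (1 - Δ) ≤ (1 + γ) * (1 - Δ) - 1 := by
    rw [← log_mul h1γ.ne' h1Δ.ne']
    exact log_le_sub_one_of_pos (by positivity)
  have hcross : γ * Fxy ≤ (γ ^ 2 / (1 + γ)) * Fy + (1 + γ) * Δ / 2 := by
    have := cross_term_le_of_sq_eq (γ := γ) hFy hΔ₀ hFxy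
    rw [div_mul_eq_mul_div, div_add_div _ _ h1γ.ne' two_ne_zero, le_div_iff₀ (by positivity)]
    linarith
  rw [gmiObjective, one_div (1 - Δ), log_inv]
  linarith

theorem gmiObjective_optimal {Δ : ℝ} (hΔ : Δ ≠ 1) :
    gmiObjective (1 / (2 * Δ)) 1 (Δ / (1 - Δ)) = (1 / 2) * log (1 / (1 - Δ)) := by
  rcases eq_or_ne Δ 0 with rfl | hΔ₀
  · simp
  have h1Δ : 1 - Δ ≠ 0 := sub_ne_zero.2 hΔ.symm
  have h1γ : 1 + Δ / (1 - Δ) = 1 / (1 - Δ) := by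
    field_simp
    ring
  rw [gmiObjective, h1γ]
  field_simp
  ring

lemma scaled_params_sq_eq (P B A a : ℝ) (hP : P ≠ 0) (hB : B ≠ 0) :
    (A / (a * P)) ^ 2 = 2 * (B / (2 * a ^ 2 * P)) * (A ^ 2 / (P * B)) := by
  rcases eq_or_ne a 0 with rfl | ha
  · simp
  · field_simp

/-- for `A² < P·B`, the supremum over `γ ≥ 0` of the scenario-(A) GMI
objective with any scaling parameter `a ≠ 0` is at most `(1/2)·log(P·B/(P·B − A²))`,
with equality when `a = A/P`. -/
theorem stmt8 (P B A : ℝ) (hP : 0 < P) (hB : 0 < B) (hAB : A ^ 2 < P * B) :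
    (∀ a : ℝ, a ≠ 0 → ∀ γ : ℝ, 0 ≤ γ →
      (1 / 2) * Real.log (1 + γ) - γ / 2 - (γ ^ 2 / (1 + γ)) * (B / (2 * a ^ 2 * P))
          + γ * (A / (a * P))
        ≤ (1 / 2) * Real.log (P * B / (P * B - A ^ 2))) ∧
    IsGreatest
      {x : ℝ | ∃ γ : ℝ, 0 ≤ γ ∧
        x = (1 / 2) * Real.log (1 + γ) - γ / 2
            - (γ ^ 2 / (1 + γ)) * (B / (2 * (A / P) ^ 2 * P)) + γ * (A / ((A / P) * P))}
      ((1 / 2) * Real.log (P * B / (P * B - A ^ 2))) := by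
  have hPB : 0 < P * B := mul_pos hP hB
  set Δ := A ^ 2 / (P * B) with hΔ
  have hΔ₀ : 0 ≤ Δ := by positivity
  have hΔ₁ : Δ < 1 := (div_lt_one hPB).2 hAB
  have hrate : P * B / (P * B - A ^ 2) = 1 / (1 - Δ) := by
    rw [hΔ, one_sub_div hPB.ne', one_div_div]
  have bound : ∀ a γ, 0 ≤ γ → gmiObjective (B / (2 * a ^ 2 * P)) (A / (a * P)) γ
      ≤ (1 / 2) * log (P * B / (P * B - A ^ 2)) := fun a γ hγ => by
    rw [hrate]
    exact gmiObjective_le (by positivity) hΔ₀ hΔ₁ (scaled_params_sq_eq P B A a hP.ne' hB.ne') hγ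
  refine ⟨fun a _ γ hγ => bound a γ hγ, ?_, ?_⟩
  · rcases eq_or_ne A 0 with hA | hA
    · -- `a = A/P = 0` here, so `γ = 0` attains the value `0 = log 1 / 2`
      exact ⟨0, le_rfl, by simp [hA, div_self hPB.ne']⟩
    · refine ⟨Δ / (1 - Δ), div_nonneg hΔ₀ (by linarith), ?_⟩
      have hFy : B / (2 * (A / P) ^ 2 * P) = 1 / (2 * Δ) := by
        rw [hΔ]
        field_simp
      have hFxy : A / ((A / P) * P) = 1 := by
        field_simp
      rw [hrate, hFy, hFxy]
      exact (gmiObjective_optimal hΔ₁.ne).symm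
  · rintro _ ⟨γ, hγ, rfl⟩
    exact bound (A / P) γ hγ
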